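/- In the topic-classification model, suppose the marginal distribution of x⁽¹⁾ is the uniform distribution over [S]. Then for all z⁽¹⁾, z⁽²⁾ ∈ [S], the density ratio of the two dropout-augmented views satisfies P(z⁽¹⁾, z⁽²⁾) / (P(z⁽¹⁾)P(z⁽²⁾)) = (1/2)·Σ_{y=1}^{M} P_c(y | z⁽¹⁾)·P_c(y | z⁽²⁾) / P_Y(y) + (S/2)·1{z⁽¹⁾ = z⁽²⁾}, where P_c(y | s) denotes the posterior probability of topic y given a component equal to s. -/
import Mathlib


/-!
Statement 17: In the topic-classification model with uniform marginal over the vocabulary, the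
density ratio of the two dropout-augmented views satisfies
`P(z¹,z²)/(P(z¹)P(z²)) = (1/2) Σ_y P_c(y|z¹)P_c(y|z²)/P_Y(y) + (S/2)·1{z¹ = z²}`.
-/

namespace Stmt17

variable {M S : ℕ}

/-- Joint distribution of the two dropout-augmented views `(z⁽¹⁾, z⁽²⁾)`:
a topic `y ∼ P_Y` is drawn, then `x = (x⁽¹⁾, x⁽²⁾)` with `x⁽¹⁾, x⁽²⁾` i.i.d. from `P_c(·|y)`,
and each view independently selects one of the two components uniformly at random. -/
noncomputable def viewJoint (PY : Fin M → ℝ) (Pc : Fin M → Fin S → ℝ)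
    (z1 z2 : Fin S) : ℝ :=
  ∑ y, ∑ x1, ∑ x2, PY y * Pc y x1 * Pc y x2 *
    ((1/2) * (if x1 = z1 then 1 else 0) + (1/2) * (if x2 = z1 then 1 else 0)) *
    ((1/2) * (if x1 = z2 then 1 else 0) + (1/2) * (if x2 = z2 then 1 else 0))

/-- Marginal distribution of a single augmented view. -/
noncomputable def viewMarg (PY : Fin M → ℝ) (Pc : Fin M → Fin S → ℝ) (z : Fin S) : ℝ :=
  ∑ w, viewJoint PY Pc z w

/-- Posterior probability `P_c(y | s)` of topic `y` given a component equal to `s`. -/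
noncomputable def posterior (PY : Fin M → ℝ) (Pc : Fin M → Fin S → ℝ)
    (y : Fin M) (s : Fin S) : ℝ :=
  PY y * Pc y s / ∑ y', PY y' * Pc y' s

lemma sum_mul_pc (Pc : Fin M → Fin S → ℝ)
    (hPc_sum : ∀ y, ∑ s, Pc y s = 1) (y : Fin M) (c : ℝ) :
    ∑ x : Fin S, c * Pc y x = c := by
  rw [← Finset.mul_sum, hPc_sum, mul_one]

lemma viewJoint_eq (PY : Fin M → ℝ) (Pc : Fin M → Fin S → ℝ)
    (hPc_sum : ∀ y, ∑ s, Pc y s = 1) (z1 z2 : Fin S) :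
    viewJoint PY Pc z1 z2 =
      (1/2) * (∑ y, PY y * Pc y z1 * Pc y z2) +
      (1/2) * (if z1 = z2 then 1 else 0) * (∑ y, PY y * Pc y z1) := by
  unfold viewJoint
  rw [Finset.mul_sum, Finset.mul_sum, ← Finset.sum_add_distrib]
  refine Finset.sum_congr rfl fun y _ => ?_
  simp only [mul_add, add_mul, mul_ite, ite_mul, mul_one, mul_zero, zero_mul, one_mul,
    Finset.sum_add_distrib, Finset.sum_ite_eq', Finset.mem_univ, if_true,
    Finset.sum_ite_irrel, Finset.sum_const_zero]
  by_cases hz : z1 = z2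
  · subst hz
    simp only [if_true, eq_self_iff_true, Finset.sum_add_distrib, Finset.sum_ite_eq',
      Finset.mem_univ, if_true]
    have A : ∑ x : Fin S, PY y * Pc y z1 * Pc y x * (1/2) * (1/2)
        = PY y * Pc y z1 * (1/4) := by
      rw [← sum_mul_pc Pc hPc_sum y (PY y * Pc y z1 * (1/4))]
      exact Finset.sum_congr rfl fun x _ => by ring
    have B : ∑ x : Fin S, PY y * Pc y x * Pc y z1 * (1/2) * (1/2)
        = PY y * Pc y z1 * (1/4) := by
      rw [← sum_mul_pc Pc hPc_sum y (PY y * Pc y z1 * (1/4))]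
      exact Finset.sum_congr rfl fun x _ => by ring
    rw [A, B]; ring
  · have hz' : z2 ≠ z1 := fun h => hz h.symm
    simp only [hz, hz', if_false, Finset.sum_add_distrib, Finset.sum_ite_eq',
      Finset.mem_univ, if_true, Finset.sum_const_zero, add_zero, zero_add]
    ring

/-- density ratio of dropout-augmented views in the topic model. -/
theorem topic_model_density_ratio
    (hS : 0 < S)
    (PY : Fin M → ℝ) (Pc : Fin M → Fin S → ℝ)
    (hPY_nonneg : ∀ y, 0 ≤ PY y) (hPY_sum : ∑ y, PY y = 1)
    (hPc_nonneg : ∀ y s, 0 ≤ Pc y s) (hPc_sum : ∀ y, ∑ s, Pc y s = 1)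
    -- the marginal distribution of `x⁽¹⁾` is uniform over `[S]`
    (hunif : ∀ s : Fin S, ∑ y, PY y * Pc y s = 1 / S) :
    ∀ z1 z2 : Fin S,
      viewJoint PY Pc z1 z2 / (viewMarg PY Pc z1 * viewMarg PY Pc z2) =
        (1/2) * (∑ y, posterior PY Pc y z1 * posterior PY Pc y z2 / PY y) +
          ((S : ℝ) / 2) * (if z1 = z2 then 1 else 0) := by
  have hSne : (S : ℝ) ≠ 0 := Nat.cast_ne_zero.mpr hS.ne'
  -- marginal equals 1/S
  have hmarg : ∀ z : Fin S, viewMarg PY Pc z = 1 / S := by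
    intro z
    unfold viewMarg
    have : ∀ w : Fin S, viewJoint PY Pc z w =
        (1/2) * (∑ y, PY y * Pc y z * Pc y w) +
        (1/2) * (if z = w then 1 else 0) * (∑ y, PY y * Pc y z) :=
      fun w => viewJoint_eq PY Pc hPc_sum z w
    simp only [this]
    rw [Finset.sum_add_distrib]
    have h1 : ∑ w : Fin S, (1/2) * (∑ y, PY y * Pc y z * Pc y w)
        = (1/2) * (∑ y, PY y * Pc y z) := by
      rw [← Finset.mul_sum]
      congr 1
      rw [Finset.sum_comm]
      exact Finset.sum_congr rfl fun y _ => sum_mul_pc Pc hPc_sum y (PY y * Pc y z)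
    have h2 : ∑ w : Fin S, (1/2) * (if z = w then 1 else 0) * (∑ y, PY y * Pc y z)
        = (1/2) * (∑ y, PY y * Pc y z) := by
      simp [mul_ite, ite_mul, Finset.sum_ite_eq, Finset.mem_univ]
    rw [h1, h2, hunif z]; ring
  -- posterior sum identity
  have hpost : ∀ z1 z2 : Fin S,
      (∑ y, posterior PY Pc y z1 * posterior PY Pc y z2 / PY y)
        = (S : ℝ)^2 * ∑ y, PY y * Pc y z1 * Pc y z2 := by
    intro z1 z2
    rw [Finset.mul_sum]
    refine Finset.sum_congr rfl fun y _ => ?_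
    unfold posterior
    rw [hunif z1, hunif z2]
    by_cases hy : PY y = 0
    · simp [hy]
    · field_simp
  intro z1 z2
  rw [hmarg z1, hmarg z2, viewJoint_eq PY Pc hPc_sum, hpost z1 z2, hunif z1]
  by_cases hz : z1 = z2 <;> simp only [hz, if_true, if_false] <;> field_simp <;> ring

end Stmt17
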